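/- Let d₁ and d₂ be as in equations (11) and (12), and U₁, U₂ ∈ ℝ, ψ ∈ ℝ. The Taylor dispersivity of the combined flow u(t,y) = U₁cos(ωt)·y + U₂cos(ωt+ψ)·y(1−y), computed as the sum of the dispersivities of its symmetric and antisymmetric parts, equals U₁²·d₁(ν) + U₂²·d₂(ν), independent of the phase shift ψ. -/
import Mathlib

noncomputable def d1 (ν : ℝ) : ℝ :=
  (ν * Real.cos ν + ν * Real.cosh ν - Real.sin ν - Real.sinh ν) /
    (2 * ν ^ 5 * (Real.cos ν + Real.cosh ν))

noncomputable def d2 (ν : ℝ) : ℝ :=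
  (ν * Real.cos ν - ν * Real.cosh ν - 3 * Real.sin ν + 3 * Real.sinh ν) /
    (6 * ν ^ 5 * (Real.cos ν - Real.cosh ν))

private lemma key_re (θ : ℝ) (z : ℂ) :
    (Complex.exp (Complex.I * θ) * z).re = Real.cos θ * z.re - Real.sin θ * z.im := by
  rw [mul_comm Complex.I, Complex.mul_re, Complex.exp_ofReal_mul_I_re,
    Complex.exp_ofReal_mul_I_im]

private lemma odd_int_zero {f : ℝ → ℝ} (hf : ∀ y, f (1 - y) = - f y) :
    ∫ y in (0:ℝ)..1, f y = 0 := by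
  have h : (∫ y in (0:ℝ)..1, f (1 - y)) = ∫ y in (0:ℝ)..1, f y := by
    rw [intervalIntegral.integral_comp_sub_left f 1]
    norm_num
  have h2 : (∫ y in (0:ℝ)..1, f (1 - y)) = - ∫ y in (0:ℝ)..1, f y := by
    simp only [hf, intervalIntegral.integral_neg]
  linarith [h.symm.trans h2]

private lemma inner_expand (θ : ℝ) {r i : ℝ → ℝ} (hr : Continuous r) (hi : Continuous i) :
    (∫ y in (0:ℝ)..1, (Real.cos θ * r y - Real.sin θ * i y) ^ 2)
      = Real.cos θ ^ 2 * (∫ y in (0:ℝ)..1, r y ^ 2)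
        - 2 * (Real.cos θ * Real.sin θ) * (∫ y in (0:ℝ)..1, r y * i y)
        + Real.sin θ ^ 2 * ∫ y in (0:ℝ)..1, i y ^ 2 := by
  have h1 : IntervalIntegrable (fun y => Real.cos θ ^ 2 * r y ^ 2) MeasureTheory.volume 0 1 :=
    (continuous_const.mul (hr.pow 2)).intervalIntegrable _ _
  have h2 : IntervalIntegrable (fun y => 2 * (Real.cos θ * Real.sin θ) * (r y * i y))
      MeasureTheory.volume 0 1 :=
    (continuous_const.mul (hr.mul hi)).intervalIntegrable _ _
  have h3 : IntervalIntegrable (fun y => Real.sin θ ^ 2 * i y ^ 2) MeasureTheory.volume 0 1 :=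
    (continuous_const.mul (hi.pow 2)).intervalIntegrable _ _
  rw [← intervalIntegral.integral_const_mul, ← intervalIntegral.integral_const_mul,
    ← intervalIntegral.integral_const_mul, ← intervalIntegral.integral_sub h1 h2,
    ← intervalIntegral.integral_add (h1.sub h2) h3]
  apply intervalIntegral.integral_congr
  intro y _
  ring

/-- The dispersivity of the combined shear/Poiseuille flow is
`U₁² d₁ + U₂² d₂`, independent of the phase shift `ψ`: for the complex
amplitudes `F₁, F₂` of the cell-problem solutions (with `F₁'` odd and `F₂'`
even about `y = 1/2`) whose separate dispersivities are `d₁(ν)` and `d₂(ν)`,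
the combined quadratic functional splits with no cross term. -/
theorem combined_flow_dispersivity (ω ψ U1 U2 ν : ℝ) (hω : 0 < ω)
    (hν : ν = Real.sqrt ω)
    (F1 F2 : ℝ → ℂ)
    (hF1c : ContDiff ℝ 1 F1) (hF2c : ContDiff ℝ 1 F2)
    (hF1odd : ∀ y, deriv F1 y = - deriv F1 (1 - y))
    (hF2even : ∀ y, deriv F2 y = deriv F2 (1 - y))
    (hd1 : (ω / (2 * Real.pi)) *
        ∫ t in (0:ℝ)..(2 * Real.pi / ω),
          ∫ y in (0:ℝ)..1, ((Complex.exp (Complex.I * (↑ω * ↑t)) * deriv F1 y).re) ^ 2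
      = d1 ν)
    (hd2 : (ω / (2 * Real.pi)) *
        ∫ t in (0:ℝ)..(2 * Real.pi / ω),
          ∫ y in (0:ℝ)..1, ((Complex.exp (Complex.I * (↑ω * ↑t)) * deriv F2 y).re) ^ 2
      = d2 ν) :
    (ω / (2 * Real.pi)) *
        ∫ t in (0:ℝ)..(2 * Real.pi / ω),
          ∫ y in (0:ℝ)..1,
            (U1 * (Complex.exp (Complex.I * (↑ω * ↑t)) * deriv F1 y).re +
              U2 * (Complex.exp (Complex.I * (↑ω * ↑t + ↑ψ)) * deriv F2 y).re) ^ 2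
      = U1 ^ 2 * d1 ν + U2 ^ 2 * d2 ν := by
  set r1 : ℝ → ℝ := fun y => (deriv F1 y).re with hr1def
  set i1 : ℝ → ℝ := fun y => (deriv F1 y).im with hi1def
  set r2 : ℝ → ℝ := fun y => (deriv F2 y).re with hr2def
  set i2 : ℝ → ℝ := fun y => (deriv F2 y).im with hi2def
  have hc1 : Continuous (deriv F1) := hF1c.continuous_deriv le_rfl
  have hc2 : Continuous (deriv F2) := hF2c.continuous_deriv le_rfl
  have hr1 : Continuous r1 := Complex.continuous_re.comp hc1
  have hi1 : Continuous i1 := Complex.continuous_im.comp hc1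
  have hr2 : Continuous r2 := Complex.continuous_re.comp hc2
  have hi2 : Continuous i2 := Complex.continuous_im.comp hc2
  -- symmetry facts
  have hr1o : ∀ y, r1 (1 - y) = - r1 y := fun y => by
    simp only [hr1def]; rw [hF1odd y]; simp
  have hi1o : ∀ y, i1 (1 - y) = - i1 y := fun y => by
    simp only [hi1def]; rw [hF1odd y]; simp
  have hr2e : ∀ y, r2 (1 - y) = r2 y := fun y => by
    simp only [hr2def]; rw [hF2even y]
  have hi2e : ∀ y, i2 (1 - y) = i2 y := fun y => by
    simp only [hi2def]; rw [hF2even y]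
  -- the G functions
  set P1 : ℝ := ∫ y in (0:ℝ)..1, r1 y ^ 2 with hP1
  set Q1 : ℝ := ∫ y in (0:ℝ)..1, r1 y * i1 y with hQ1
  set R1 : ℝ := ∫ y in (0:ℝ)..1, i1 y ^ 2 with hR1
  set P2 : ℝ := ∫ y in (0:ℝ)..1, r2 y ^ 2 with hP2
  set Q2 : ℝ := ∫ y in (0:ℝ)..1, r2 y * i2 y with hQ2
  set R2 : ℝ := ∫ y in (0:ℝ)..1, i2 y ^ 2 with hR2
  set G1 : ℝ → ℝ := fun θ =>
    Real.cos θ ^ 2 * P1 - 2 * (Real.cos θ * Real.sin θ) * Q1 + Real.sin θ ^ 2 * R1 with hG1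
  set G2 : ℝ → ℝ := fun θ =>
    Real.cos θ ^ 2 * P2 - 2 * (Real.cos θ * Real.sin θ) * Q2 + Real.sin θ ^ 2 * R2 with hG2
  have hG1c : Continuous G1 := by
    apply Continuous.add
    apply Continuous.sub
    · exact ((Real.continuous_cos.pow 2).mul continuous_const)
    · exact ((continuous_const.mul (Real.continuous_cos.mul Real.continuous_sin)).mul
        continuous_const)
    · exact ((Real.continuous_sin.pow 2).mul continuous_const)
  have hG2c : Continuous G2 := by
    apply Continuous.add
    apply Continuous.sub
    · exact ((Real.continuous_cos.pow 2).mul continuous_const)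
    · exact ((continuous_const.mul (Real.continuous_cos.mul Real.continuous_sin)).mul
        continuous_const)
    · exact ((Real.continuous_sin.pow 2).mul continuous_const)
  -- inner integrals for the separate flows
  have hin1 : ∀ t : ℝ,
      (∫ y in (0:ℝ)..1, ((Complex.exp (Complex.I * (↑ω * ↑t)) * deriv F1 y).re) ^ 2)
        = G1 (ω * t) := by
    intro t
    simp only [hG1, hP1, hQ1, hR1]
    rw [← inner_expand (ω * t) hr1 hi1]
    apply intervalIntegral.integral_congr
    intro y _
    beta_reduce
    rw [show ((ω : ℂ) * (t : ℂ)) = ((ω * t : ℝ) : ℂ) by push_cast; ring, key_re]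
  have hin2 : ∀ t : ℝ,
      (∫ y in (0:ℝ)..1, ((Complex.exp (Complex.I * (↑ω * ↑t)) * deriv F2 y).re) ^ 2)
        = G2 (ω * t) := by
    intro t
    simp only [hG2, hP2, hQ2, hR2]
    rw [← inner_expand (ω * t) hr2 hi2]
    apply intervalIntegral.integral_congr
    intro y _
    beta_reduce
    rw [show ((ω : ℂ) * (t : ℂ)) = ((ω * t : ℝ) : ℂ) by push_cast; ring, key_re]
  -- inner integral for the combined flow
  have hinC : ∀ t : ℝ,
      (∫ y in (0:ℝ)..1,
        (U1 * (Complex.exp (Complex.I * (↑ω * ↑t)) * deriv F1 y).re +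
          U2 * (Complex.exp (Complex.I * (↑ω * ↑t + ↑ψ)) * deriv F2 y).re) ^ 2)
        = U1 ^ 2 * G1 (ω * t) + U2 ^ 2 * G2 (ω * t + ψ) := by
    intro t
    set a : ℝ → ℝ := fun y => Real.cos (ω * t) * r1 y - Real.sin (ω * t) * i1 y with ha
    set b : ℝ → ℝ := fun y =>
      Real.cos (ω * t + ψ) * r2 y - Real.sin (ω * t + ψ) * i2 y with hb
    have hac : Continuous a := (continuous_const.mul hr1).sub (continuous_const.mul hi1)
    have hbc : Continuous b := (continuous_const.mul hr2).sub (continuous_const.mul hi2)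
    have step1 : (∫ y in (0:ℝ)..1,
        (U1 * (Complex.exp (Complex.I * (↑ω * ↑t)) * deriv F1 y).re +
          U2 * (Complex.exp (Complex.I * (↑ω * ↑t + ↑ψ)) * deriv F2 y).re) ^ 2)
        = ∫ y in (0:ℝ)..1,
          (U1 ^ 2 * a y ^ 2 + 2 * (U1 * U2) * (a y * b y) + U2 ^ 2 * b y ^ 2) := by
      apply intervalIntegral.integral_congr
      intro y _
      beta_reduce
      rw [show ((ω : ℂ) * (t : ℂ) + (ψ : ℂ)) = ((ω * t + ψ : ℝ) : ℂ) by push_cast; ring,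
        show ((ω : ℂ) * (t : ℂ)) = ((ω * t : ℝ) : ℂ) by push_cast; ring,
        key_re, key_re]
      simp only [ha, hb]
      ring
    have hA : IntervalIntegrable (fun y => U1 ^ 2 * a y ^ 2) MeasureTheory.volume 0 1 :=
      (continuous_const.mul (hac.pow 2)).intervalIntegrable _ _
    have hAB : IntervalIntegrable (fun y => 2 * (U1 * U2) * (a y * b y))
        MeasureTheory.volume 0 1 :=
      (continuous_const.mul (hac.mul hbc)).intervalIntegrable _ _
    have hB : IntervalIntegrable (fun y => U2 ^ 2 * b y ^ 2) MeasureTheory.volume 0 1 :=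
      (continuous_const.mul (hbc.pow 2)).intervalIntegrable _ _
    have hcross : (∫ y in (0:ℝ)..1, a y * b y) = 0 := by
      apply odd_int_zero
      intro y
      simp only [ha, hb, hr1o y, hi1o y, hr2e y, hi2e y]
      ring
    rw [step1, intervalIntegral.integral_add (hA.add hAB) hB,
      intervalIntegral.integral_add hA hAB,
      intervalIntegral.integral_const_mul, intervalIntegral.integral_const_mul,
      intervalIntegral.integral_const_mul, hcross,
      inner_expand _ hr1 hi1, inner_expand _ hr2 hi2]
    simp only [hG1, hG2, hP1, hQ1, hR1, hP2, hQ2, hR2]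
    ring
  -- time-shift invariance for G2
  have hperiodic : Function.Periodic (fun t => G2 (ω * t)) (2 * Real.pi / ω) := by
    intro t
    simp only
    have : ω * (t + 2 * Real.pi / ω) = ω * t + 2 * Real.pi := by
      field_simp
    rw [this]
    simp only [hG2]
    simp [Real.cos_add_two_pi, Real.sin_add_two_pi]
  have hshift : (∫ t in (0:ℝ)..(2 * Real.pi / ω), G2 (ω * t + ψ))
      = ∫ t in (0:ℝ)..(2 * Real.pi / ω), G2 (ω * t) := by
    have h1 : (∫ t in (0:ℝ)..(2 * Real.pi / ω), G2 (ω * t + ψ))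
        = ∫ t in (0:ℝ)..(2 * Real.pi / ω), (fun s => G2 (ω * s)) (t + ψ / ω) := by
      apply intervalIntegral.integral_congr
      intro t _
      simp only
      congr 1
      field_simp
    rw [h1, intervalIntegral.integral_comp_add_right (fun s => G2 (ω * s)) (ψ / ω)]
    have := hperiodic.intervalIntegral_add_eq (ψ / ω) 0
    simpa [zero_add, add_comm] using this
  -- put everything together
  have hsplit : (∫ t in (0:ℝ)..(2 * Real.pi / ω),
      ∫ y in (0:ℝ)..1,
        (U1 * (Complex.exp (Complex.I * (↑ω * ↑t)) * deriv F1 y).re +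
          U2 * (Complex.exp (Complex.I * (↑ω * ↑t + ↑ψ)) * deriv F2 y).re) ^ 2)
      = U1 ^ 2 * (∫ t in (0:ℝ)..(2 * Real.pi / ω), G1 (ω * t))
        + U2 ^ 2 * ∫ t in (0:ℝ)..(2 * Real.pi / ω), G2 (ω * t + ψ) := by
    have e1 : (∫ t in (0:ℝ)..(2 * Real.pi / ω),
        ∫ y in (0:ℝ)..1,
          (U1 * (Complex.exp (Complex.I * (↑ω * ↑t)) * deriv F1 y).re +
            U2 * (Complex.exp (Complex.I * (↑ω * ↑t + ↑ψ)) * deriv F2 y).re) ^ 2)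
        = ∫ t in (0:ℝ)..(2 * Real.pi / ω),
            (U1 ^ 2 * G1 (ω * t) + U2 ^ 2 * G2 (ω * t + ψ)) := by
      apply intervalIntegral.integral_congr
      intro t _
      exact hinC t
    have hI1 : IntervalIntegrable (fun t => U1 ^ 2 * G1 (ω * t))
        MeasureTheory.volume 0 (2 * Real.pi / ω) :=
      (continuous_const.mul (hG1c.comp (continuous_const.mul continuous_id))).intervalIntegrable _ _
    have hI2 : IntervalIntegrable (fun t => U2 ^ 2 * G2 (ω * t + ψ))
        MeasureTheory.volume 0 (2 * Real.pi / ω) :=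
      (continuous_const.mul (hG2c.comp ((continuous_const.mul continuous_id).add
        continuous_const))).intervalIntegrable _ _
    rw [e1, intervalIntegral.integral_add hI1 hI2,
      intervalIntegral.integral_const_mul, intervalIntegral.integral_const_mul]
  calc (ω / (2 * Real.pi)) *
        ∫ t in (0:ℝ)..(2 * Real.pi / ω),
          ∫ y in (0:ℝ)..1,
            (U1 * (Complex.exp (Complex.I * (↑ω * ↑t)) * deriv F1 y).re +
              U2 * (Complex.exp (Complex.I * (↑ω * ↑t + ↑ψ)) * deriv F2 y).re) ^ 2
      = U1 ^ 2 * ((ω / (2 * Real.pi)) * ∫ t in (0:ℝ)..(2 * Real.pi / ω), G1 (ω * t))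
        + U2 ^ 2 * ((ω / (2 * Real.pi)) * ∫ t in (0:ℝ)..(2 * Real.pi / ω), G2 (ω * t)) := by
        rw [hsplit, hshift]; ring
    _ = U1 ^ 2 * d1 ν + U2 ^ 2 * d2 ν := by
        rw [← hd1, ← hd2]
        congr 2
        · congr 1
          apply intervalIntegral.integral_congr
          intro t _
          exact (hin1 t).symm
        · congr 1
          apply intervalIntegral.integral_congr
          intro t _
          exact (hin2 t).symm
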